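/- arXiv:1903.04214 — 7 statements merged into one kernel-verified Lean document; each statement's English description precedes it below -/
import Mathlib

section
/- Let Σ be a finite alphabet, let w be a nonempty finite partial word over Σ, and let p be an integer with p ≥ 2|w| such that |w| divides p. Suppose there exist a positive integer C and a language L of finite words over Σ such that: (I) the empty word belongs to L; (II) every u ∈ L avoids squares of period less than p; (III) for every u ∈ L there are at least C different words v ∈ Σ^{|w|} compatible with w such that uv ∈ L; and (IV) there exists a real number x with 0 < x < 1 such that C·(1 − x^{p/|w| − 1}·|w|²/(1 − x)) ≥ x^{−1}. Then the set S(w^ω) of finite square-free words over Σ compatible with the infinite partial word w^ω = www··· is infinite. -/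
/-- A finite word is square-free: no factor is of the form `v ++ v` with `v` nonempty. -/
def SqFree {α : Type*} (u : List α) : Prop :=
  ∀ v : List α, v ≠ [] → ¬ ((v ++ v) <:+: u)

/-- `u` avoids squares of period less than `p`. -/
def AvoidsSquaresLt {α : Type*} (p : ℕ) (u : List α) : Prop :=
  ∀ v : List α, v ≠ [] → v.length < p → ¬ ((v ++ v) <:+: u)

/-- `v` is compatible with the finite partial word `μ` (where `none` is the wildcard `⋄`). -/
def CompatFin {α : Type*} (v : List α) (μ : List (Option α)) : Prop :=
  v.length ≤ μ.length ∧
    ∀ i : ℕ, i < v.length → ∀ a : α, μ[i]? = some (some a) → v[i]? = some a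

/-- `v` is compatible with the infinite partial word `μ` (where `none` is the wildcard `⋄`). -/
def CompatInf {α : Type*} (v : List α) (μ : ℕ → Option α) : Prop :=
  ∀ i : ℕ, i < v.length → ∀ a : α, μ i = some a → v[i]? = some a

/-- The infinite partial word `w^ω = www⋯`. -/
def wOmega {α : Type*} (w : List (Option α)) : ℕ → Option α :=
  fun i => (w[i % w.length]?).join

/-!
Grow a tree of square-free words level by level: each word `u` of level `m` has length `m |w|`,
lies in `L`, and is extended by exactly `C` chosen compatible words `v` with `u ++ v ∈ L`,
discarding the extensions that contain a square. As `u ++ v` avoids squares of period less than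
`p` and `u` is square-free, a discarded `u ++ v` contains a square `z z` with `|z| ≥ p` ending
inside `v`. Such a pair `(u, v)` is determined by `v`, two offsets smaller than `|w|`, and the
prefix of `u` up to the first block boundary after the first `z`, a word of level at most
`m + 1 - p / |w|`. Writing `T m` for the size of level `m`, this gives
`T (m + 1) ≥ C (T m - |w|² ∑_{j ≤ m + 1 - p/|w|} T j)`, and condition (IV) then makes
`T m x ^ m` nondecreasing, so no level is empty.
-/

open Finset

section

variable {α : Type*}

theorem SqFree.nil : SqFree ([] : List α) := fun _ hv h =>
  hv (List.append_eq_nil_iff.1 (List.infix_nil.1 h)).1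

theorem exists_long_square_of_not_sqFree_append {p : ℕ} {u v : List α} (hu : SqFree u)
    (hp : AvoidsSquaresLt p (u ++ v)) (h : ¬ SqFree (u ++ v)) :
    ∃ a z b : List α, u ++ v = a ++ (z ++ z) ++ b ∧ p ≤ z.length ∧
      u.length < a.length + 2 * z.length := by
  simp only [SqFree, not_forall, not_not] at h
  obtain ⟨z, hz, a, b, hab⟩ := h
  refine ⟨a, z, b, hab.symm, not_lt.1 fun hlt => hp z hz hlt ⟨a, b, hab⟩, ?_⟩
  by_contra! hle
  have hpre : a ++ (z ++ z) <+: u :=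
    List.prefix_of_prefix_length_le (hab ▸ List.prefix_append _ _) (List.prefix_append u v)
      (by simp; omega)
  exact hu z hz ((List.infix_append a (z ++ z) []).trans (by simpa using hpre.isInfix))

theorem CompatInf.append {w : List (Option α)} {u v : List α} (hu : CompatInf u (wOmega w))
    (hdvd : w.length ∣ u.length) (hv : CompatFin v w) : CompatInf (u ++ v) (wOmega w) := by
  intro i hi a ha
  rcases lt_or_ge i u.length with h | h
  · rw [List.getElem?_append_left h]
    exact hu i h a ha
  · obtain ⟨j, rfl⟩ := Nat.exists_eq_add_of_le h
    have hj : j < v.length := by simpa using hi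
    have hmod : (u.length + j) % w.length = j := by
      rw [Nat.add_mod, Nat.mod_eq_zero_of_dvd hdvd, zero_add, Nat.mod_mod,
        Nat.mod_eq_of_lt (hj.trans_le hv.1)]
    rw [List.getElem?_append_right h, Nat.add_sub_cancel_left]
    rw [wOmega, hmod, Option.join_eq_some_iff] at ha
    exact hv.2 j hj a ha

def squareCompletion (P : List α) (l q : ℕ) : List α :=
  P.take l ++ (P.take l).drop (l - q)

theorem squareCompletion_take {a z b : List α} {l : ℕ} (hl : a.length + z.length ≤ l) :
    squareCompletion ((a ++ (z ++ z) ++ b).take l) (a.length + z.length) z.length =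
      a ++ z ++ z := by
  have hpre : ((a ++ (z ++ z) ++ b).take l).take (a.length + z.length) = a ++ z := by
    rw [List.take_take, min_eq_left hl, show a ++ (z ++ z) ++ b = (a ++ z) ++ (z ++ b) by simp]
    exact List.take_left' (by simp)
  rw [squareCompletion, hpre, Nat.add_sub_cancel, List.drop_left' rfl, List.append_assoc]

section Growth

variable {s : ℕ → ℝ} {x : ℝ} {k m : ℕ}

theorem sum_range_le_of_mul_pow_le (hk : 1 ≤ k) (hx0 : 0 < x) (hx1 : x < 1) (hs : 0 ≤ s m)
    (h : ∀ j ≤ m, s j * x ^ j ≤ s m * x ^ m) :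
    ∑ j ∈ range (m + 2 - k), s j ≤ s m * x ^ (k - 1) / (1 - x) := by
  have hterm : ∀ j ∈ range (m + 2 - k), s j ≤ s m * x ^ (k - 1) * x ^ (m + 2 - k - 1 - j) := by
    intro j hj
    have hj : j < m + 2 - k := mem_range.1 hj
    have hpow : x ^ m = x ^ j * (x ^ (k - 1) * x ^ (m + 2 - k - 1 - j)) := by
      rw [← pow_add, ← pow_add]; congr 1; omega
    have := h j (by omega)
    rw [hpow] at this
    nlinarith [pow_pos hx0 j]
  calc ∑ j ∈ range (m + 2 - k), s j
      ≤ ∑ j ∈ range (m + 2 - k), s m * x ^ (k - 1) * x ^ (m + 2 - k - 1 - j) := sum_le_sum hterm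
    _ = s m * x ^ (k - 1) * ∑ i ∈ Ico 0 (m + 2 - k), x ^ i := by
      rw [← mul_sum, sum_range_reflect (fun j => x ^ j), range_eq_Ico]
    _ ≤ s m * x ^ (k - 1) * (x ^ 0 / (1 - x)) :=
      mul_le_mul_of_nonneg_left (geom_sum_Ico_le_of_lt_one hx0.le hx1)
        (mul_nonneg hs (pow_nonneg hx0.le _))
    _ = s m * x ^ (k - 1) / (1 - x) := by ring

theorem monotone_mul_pow_of_le_succ {C N : ℝ} (hk : 1 ≤ k) (hs : ∀ m, 0 ≤ s m)
    (hC : 0 ≤ C) (hN : 0 ≤ N) (hx0 : 0 < x) (hx1 : x < 1)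
    (hx : x⁻¹ ≤ C * (1 - x ^ (k - 1) * N / (1 - x)))
    (hrec : ∀ m, C * (s m - N * ∑ j ∈ range (m + 2 - k), s j) ≤ s (m + 1)) :
    Monotone fun m => s m * x ^ m := by
  suffices H : ∀ m, ∀ j ≤ m, s j * x ^ j ≤ s m * x ^ m from fun j m hjm => H m j hjm
  intro m
  induction m with
  | zero => intro j hj; rw [Nat.le_zero.1 hj]
  | succ m ih =>
    have hsum := sum_range_le_of_mul_pow_le hk hx0 hx1 (hs m) ih
    have hstep : x⁻¹ * s m ≤ s (m + 1) :=
      calc x⁻¹ * s m ≤ C * (1 - x ^ (k - 1) * N / (1 - x)) * s m :=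
            mul_le_mul_of_nonneg_right hx (hs m)
        _ = C * (s m - N * (s m * x ^ (k - 1) / (1 - x))) := by ring
        _ ≤ C * (s m - N * ∑ j ∈ range (m + 2 - k), s j) := by gcongr
        _ ≤ s (m + 1) := hrec m
    have hm : s m * x ^ m ≤ s (m + 1) * x ^ (m + 1) := by
      calc s m * x ^ m = x⁻¹ * s m * x ^ (m + 1) := by field_simp; ring
        _ ≤ s (m + 1) * x ^ (m + 1) := by gcongr
    intro j hj
    rcases Nat.le_add_one_iff.1 hj with hj | rfl
    · exact (ih j hj).trans hm
    · exact le_rfl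

end Growth

section Tree

variable (E : List α → Finset (List α))

open scoped Classical in
noncomputable def extensionTree : ℕ → Finset (List α)
  | 0 => {[]}
  | m + 1 => (extensionTree m).biUnion fun u =>
      ((E u).filter fun v => SqFree (u ++ v)).image (u ++ ·)

open scoped Classical in
noncomputable def badExtensions (m : ℕ) : Finset ((_ : List α) × List α) :=
  (extensionTree E m).sigma fun u => (E u).filter fun v => ¬ SqFree (u ++ v)

variable {E} {n m : ℕ}

theorem mem_extensionTree_succ {u' : List α} :
    u' ∈ extensionTree E (m + 1) ↔
      ∃ u ∈ extensionTree E m, ∃ v ∈ E u, SqFree (u ++ v) ∧ u ++ v = u' := by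
  simp [extensionTree, and_assoc]

theorem extensionTree_induction {P : ℕ → List α → Prop} (h0 : P 0 [])
    (hstep : ∀ m u v, u ∈ extensionTree E m → v ∈ E u → SqFree (u ++ v) → P m u →
      P (m + 1) (u ++ v)) :
    ∀ {m u}, u ∈ extensionTree E m → P m u := by
  intro m
  induction m with
  | zero =>
    intro u hu
    rw [extensionTree, mem_singleton] at hu
    exact hu ▸ h0
  | succ m ih =>
    intro u' hu'
    obtain ⟨u, hu, v, hv, hsq, rfl⟩ := mem_extensionTree_succ.1 hu'
    exact hstep m u v hu hv hsq (ih hu)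

theorem sqFree_of_mem_extensionTree {u : List α} (hu : u ∈ extensionTree E m) : SqFree u :=
  extensionTree_induction (P := fun _ u => SqFree u) SqFree.nil
    (fun _ _ _ _ _ hsq _ => hsq) hu

theorem length_of_mem_extensionTree (hlen : ∀ u, ∀ v ∈ E u, v.length = n) {u : List α}
    (hu : u ∈ extensionTree E m) : u.length = m * n :=
  extensionTree_induction (P := fun m u => u.length = m * n) (by simp)
    (fun m _ v _ hv _ hu => by rw [List.length_append, hu, hlen _ v hv, Nat.succ_mul]) hu

theorem take_mem_extensionTree (hlen : ∀ u, ∀ v ∈ E u, v.length = n) {u : List α}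
    (hu : u ∈ extensionTree E m) {j : ℕ} (hj : j ≤ m) : u.take (j * n) ∈ extensionTree E j := by
  refine extensionTree_induction (P := fun m u => ∀ j ≤ m, u.take (j * n) ∈ extensionTree E j)
    ?_ ?_ hu j hj
  · intro j hj
    rw [Nat.le_zero.1 hj]
    simp [extensionTree]
  · intro m u v hu hv hsq ih j hj
    have hlu := length_of_mem_extensionTree hlen hu
    rcases Nat.le_add_one_iff.1 hj with hj | rfl
    · rw [List.take_append_of_le_length (by rw [hlu]; exact Nat.mul_le_mul_right _ hj)]
      exact ih j hj
    · rw [List.take_of_length_le (by simp [hlu, hlen u v hv, Nat.succ_mul])]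
      exact mem_extensionTree_succ.2 ⟨u, hu, v, hv, hsq, rfl⟩

theorem card_extensionTree_succ_add_card_badExtensions (hlen : ∀ u, ∀ v ∈ E u, v.length = n)
    (m : ℕ) :
    #(extensionTree E (m + 1)) + #(badExtensions E m) = ∑ u ∈ extensionTree E m, #(E u) := by
  classical
  have hgood : #(extensionTree E (m + 1)) =
      ∑ u ∈ extensionTree E m, #((E u).filter fun v => SqFree (u ++ v)) := by
    rw [extensionTree, card_biUnion]
    · exact sum_congr rfl fun u _ => card_image_of_injective _ fun _ _ => List.append_cancel_left
    · intro u₁ h₁ u₂ h₂ hne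
      simp only [Function.onFun, disjoint_left, mem_image, mem_filter]
      rintro _ ⟨v₁, -, rfl⟩ ⟨v₂, -, heq⟩
      exact hne (List.append_inj heq.symm (by
        rw [length_of_mem_extensionTree hlen h₁, length_of_mem_extensionTree hlen h₂])).1
  rw [hgood, badExtensions, card_sigma, ← sum_add_distrib]
  exact sum_congr rfl fun u _ => card_filter_add_card_filter_not _

end Tree

section Counting

variable {E : List α → Finset (List α)} {n k m : ℕ}

/-- A class `(j, s, r)` records a square `a z z` ending `r` letters before position `(m + 1) n`
whose first half ends `s` letters before position `j n`. -/
def squareClasses (n k m : ℕ) : Finset (ℕ × ℕ × ℕ) :=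
  range (m + 2 - k) ×ˢ range n ×ˢ range n

def recoverPrefix (n m : ℕ) (c : ℕ × ℕ × ℕ) (P : List α) : List α :=
  (squareCompletion P (c.1 * n - c.2.1) ((m + 1) * n - c.2.2 - (c.1 * n - c.2.1))).take (m * n)

theorem exists_squareClasses_of_mem_badExtensions (hn : 0 < n) (hk : 1 ≤ k)
    (hlen : ∀ u, ∀ v ∈ E u, v.length = n)
    (hE : ∀ u, ∀ v ∈ E u, AvoidsSquaresLt (k * n) (u ++ v)) {u v : List α}
    (huv : ⟨u, v⟩ ∈ badExtensions E m) :
    ∃ c ∈ squareClasses n k m, u.take (c.1 * n) ∈ extensionTree E c.1 ∧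
      recoverPrefix n m c (u.take (c.1 * n)) = u := by
  classical
  simp only [badExtensions, mem_sigma, mem_filter] at huv
  obtain ⟨hu, hv, hbad⟩ := huv
  have hlu := length_of_mem_extensionTree hlen hu
  obtain ⟨a, z, b, hsq, hkz, hend⟩ :=
    exists_long_square_of_not_sqFree_append (sqFree_of_mem_extensionTree hu) (hE u v hv) hbad
  have hlsq : a.length + 2 * z.length + b.length = m * n + n := by
    have := congrArg List.length hsq
    simp only [List.length_append, hlu, hlen u v hv] at this
    omega
  obtain ⟨j, hjl, hjl'⟩ : ∃ j, a.length + z.length ≤ j * n ∧ j * n < a.length + z.length + n :=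
    ⟨(a.length + z.length + n - 1) / n,
      by have := Nat.lt_div_mul_add (a := a.length + z.length + n - 1) hn; omega,
      by have := Nat.div_mul_le_self (a.length + z.length + n - 1) n; omega⟩
  have hjk : j < m + 2 - k := by
    by_contra! hge
    have h1 : (m + 2 - k) * n ≤ j * n := Nat.mul_le_mul_right n hge
    have h2 : (m + 2) * n ≤ (m + 2 - k) * n + k * n := by
      rw [← Nat.add_mul]; exact Nat.mul_le_mul_right n (by omega)
    rw [Nat.add_mul] at h2
    omega
  have hj : j * n ≤ u.length := by rw [hlu]; exact Nat.mul_le_mul_right n (by omega)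
  refine ⟨(j, j * n - (a.length + z.length), (m + 1) * n - (a.length + 2 * z.length)), ?_,
    take_mem_extensionTree hlen hu (by omega), ?_⟩
  · simp only [squareClasses, mem_product, mem_range, Nat.succ_mul]
    omega
  · have hP : u.take (j * n) = (a ++ (z ++ z) ++ b).take (j * n) := by
      rw [← hsq, List.take_append_of_le_length hj]
    have hmn : (m + 1) * n = m * n + n := Nat.succ_mul m n
    simp only [recoverPrefix]
    rw [hP, show j * n - (j * n - (a.length + z.length)) = a.length + z.length by omega,
      show (m + 1) * n - ((m + 1) * n - (a.length + 2 * z.length)) - (a.length + z.length) =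
        z.length by omega, squareCompletion_take hjl]
    calc (a ++ z ++ z).take (m * n)
        = (a ++ z ++ z ++ b).take (m * n) :=
          (List.take_append_of_le_length (by simp only [List.length_append]; omega)).symm
      _ = (u ++ v).take (m * n) := by rw [hsq]; simp only [List.append_assoc]
      _ = u := List.take_left' hlu

theorem card_badExtensions_le (hn : 0 < n) (hk : 1 ≤ k) (hlen : ∀ u, ∀ v ∈ E u, v.length = n)
    (hE : ∀ u, ∀ v ∈ E u, AvoidsSquaresLt (k * n) (u ++ v)) {C : ℕ} (hC : ∀ u, #(E u) ≤ C) :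
    #(badExtensions E m) ≤ n ^ 2 * ∑ j ∈ range (m + 2 - k), C * #(extensionTree E j) := by
  classical
  let codes := (squareClasses n k m).sigma fun c =>
    (extensionTree E c.1).sigma fun P => E (recoverPrefix n m c P)
  have hsub : badExtensions E m ⊆
      codes.image fun x => (⟨recoverPrefix n m x.1 x.2.1, x.2.2⟩ : (_ : List α) × List α) := by
    rintro ⟨u, v⟩ huv
    obtain ⟨c, hc, hP, hrec⟩ := exists_squareClasses_of_mem_badExtensions hn hk hlen hE huv
    have hv : v ∈ E u := (mem_filter.1 (mem_sigma.1 huv).2).1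
    refine mem_image.2 ⟨⟨c, u.take (c.1 * n), v⟩, mem_sigma.2 ⟨hc, mem_sigma.2 ⟨hP, ?_⟩⟩, ?_⟩ <;>
      simp only [hrec, hv]
  calc #(badExtensions E m) ≤ #codes := (card_le_card hsub).trans card_image_le
    _ = ∑ c ∈ squareClasses n k m, ∑ P ∈ extensionTree E c.1, #(E (recoverPrefix n m c P)) := by
      simp only [codes, card_sigma]
    _ ≤ ∑ c ∈ squareClasses n k m, C * #(extensionTree E c.1) := by
      gcongr with c
      exact (sum_le_card_nsmul _ _ _ fun P _ => hC _).trans_eq (by rw [smul_eq_mul, mul_comm])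
    _ = n ^ 2 * ∑ j ∈ range (m + 2 - k), C * #(extensionTree E j) := by
      rw [squareClasses, sum_product, mul_sum]
      simp [sq]

theorem le_card_extensionTree_succ (hn : 0 < n) (hk : 1 ≤ k)
    (hlen : ∀ u, ∀ v ∈ E u, v.length = n)
    (hE : ∀ u, ∀ v ∈ E u, AvoidsSquaresLt (k * n) (u ++ v)) {C : ℕ} (hC : ∀ u, #(E u) ≤ C)
    (hCeq : ∀ u ∈ extensionTree E m, #(E u) = C) :
    (C : ℝ) * (#(extensionTree E m) - n ^ 2 * ∑ j ∈ range (m + 2 - k), (#(extensionTree E j) : ℝ))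
      ≤ #(extensionTree E (m + 1)) := by
  have hsum := card_extensionTree_succ_add_card_badExtensions hlen m
  rw [sum_congr rfl hCeq, sum_const, smul_eq_mul] at hsum
  have hbad := card_badExtensions_le (m := m) hn hk hlen hE hC
  rw [← mul_sum] at hbad
  have hsumR : (#(extensionTree E (m + 1)) : ℝ) + #(badExtensions E m) =
      #(extensionTree E m) * C := by exact_mod_cast hsum
  have hbadR : (#(badExtensions E m) : ℝ) ≤
      n ^ 2 * (C * ∑ j ∈ range (m + 2 - k), (#(extensionTree E j) : ℝ)) := by exact_mod_cast hbad
  linarith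

end Counting

section Choice

variable {w : List (Option α)} {C : ℕ} {L : Set (List α)} {u : List α}

def compatExtensions (w : List (Option α)) (L : Set (List α)) (u : List α) : Set (List α) :=
  {v | v.length = w.length ∧ CompatFin v w ∧ u ++ v ∈ L}

open scoped Classical in
noncomputable def chooseExtensions (w : List (Option α)) (C : ℕ) (L : Set (List α))
    (u : List α) : Finset (List α) :=
  if h : ∃ t : Finset (List α), ↑t ⊆ compatExtensions w L u ∧ #t = C then h.choose else ∅

theorem chooseExtensions_subset : ↑(chooseExtensions w C L u) ⊆ compatExtensions w L u := by
  unfold chooseExtensions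
  split_ifs with h
  · exact h.choose_spec.1
  · simp

theorem card_chooseExtensions_le : #(chooseExtensions w C L u) ≤ C := by
  unfold chooseExtensions
  split_ifs with h
  · exact h.choose_spec.2.le
  · simp

theorem card_chooseExtensions [Finite α] (hC : C ≤ (compatExtensions w L u).ncard) :
    #(chooseExtensions w C L u) = C := by
  have hfin : (compatExtensions w L u).Finite :=
    (List.finite_length_eq α w.length).subset fun _ hv => hv.1
  obtain ⟨t, hts, htC⟩ := Set.exists_subset_card_eq hC
  lift t to Finset (List α) using hfin.subset hts
  have h : ∃ t : Finset (List α), ↑t ⊆ compatExtensions w L u ∧ #t = C :=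
    ⟨t, hts, by rwa [Set.ncard_coe_finset] at htC⟩
  unfold chooseExtensions
  rw [dif_pos h]
  exact h.choose_spec.2

end Choice

section Infinite

variable {w : List (Option α)} {E : List α → Finset (List α)}

theorem compatInf_of_mem_extensionTree (hlen : ∀ u, ∀ v ∈ E u, v.length = w.length)
    (hE : ∀ u, ∀ v ∈ E u, CompatFin v w) {m : ℕ} {u : List α} (hu : u ∈ extensionTree E m) :
    CompatInf u (wOmega w) :=
  extensionTree_induction (P := fun _ u => CompatInf u (wOmega w))
    (fun _ hi => absurd hi (Nat.not_lt_zero _))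
    (fun m u v hu hv _ ih =>
      ih.append ⟨m, by rw [length_of_mem_extensionTree hlen hu, mul_comm]⟩ (hE u v hv)) hu

theorem infinite_setOf_sqFree_compatInf_of_nonempty (hw : w ≠ [])
    (hlen : ∀ u, ∀ v ∈ E u, v.length = w.length) (hE : ∀ u, ∀ v ∈ E u, CompatFin v w)
    (hne : ∀ m, (extensionTree E m).Nonempty) :
    {v : List α | SqFree v ∧ CompatInf v (wOmega w)}.Infinite := by
  choose f hf using hne
  refine Set.infinite_of_injective_forall_mem (f := f) (fun m₁ m₂ h => ?_)
    fun m => ⟨sqFree_of_mem_extensionTree (hf m), compatInf_of_mem_extensionTree hlen hE (hf m)⟩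
  replace h := congrArg List.length h
  rw [length_of_mem_extensionTree hlen (hf m₁), length_of_mem_extensionTree hlen (hf m₂)] at h
  exact Nat.eq_of_mul_eq_mul_right (List.length_pos_iff.2 hw) h

end Infinite

end

theorem squares_avoidable_forced_letters_singleton_general
    {α : Type*} [Fintype α] (w : List (Option α)) (hw : w ≠ [])
    (p : ℕ) (hp : 2 * w.length ≤ p) (hdvd : w.length ∣ p)
    (C : ℕ) (L : Set (List α))
    (hI : [] ∈ L)
    (hII : ∀ u ∈ L, AvoidsSquaresLt p u)
    (hIII : ∀ u ∈ L,
      C ≤ Set.ncard {v : List α | v.length = w.length ∧ CompatFin v w ∧ u ++ v ∈ L})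
    (hIV : ∃ x : ℝ, 0 < x ∧ x < 1 ∧
      (x⁻¹ : ℝ) ≤ (C : ℝ) * (1 - x ^ (p / w.length - 1) * (w.length : ℝ) ^ 2 / (1 - x))) :
    {v : List α | SqFree v ∧ CompatInf v (wOmega w)}.Infinite := by
  obtain ⟨x, hx0, hx1, hx⟩ := hIV
  set n := w.length
  set k := p / n
  set E := chooseExtensions w C L
  have hn : 0 < n := List.length_pos_iff.2 hw
  have hkn : k * n = p := Nat.div_mul_cancel hdvd
  have hk : 1 ≤ k := Nat.pos_of_ne_zero fun hk0 => by rw [hk0, zero_mul] at hkn; omega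
  have hcompat : ∀ u, ∀ v ∈ E u, v ∈ compatExtensions w L u := fun _ _ hv =>
    chooseExtensions_subset hv
  have hlen : ∀ u, ∀ v ∈ E u, v.length = n := fun u v hv => (hcompat u v hv).1
  have hL : ∀ {m u}, u ∈ extensionTree E m → u ∈ L :=
    extensionTree_induction (P := fun _ u => u ∈ L) hI fun _ u v _ hv _ _ => (hcompat u v hv).2.2
  have hmono := monotone_mul_pow_of_le_succ (s := fun m => (#(extensionTree E m) : ℝ)) hk
    (fun _ => Nat.cast_nonneg _) (Nat.cast_nonneg C) (sq_nonneg (n : ℝ)) hx0 hx1 hx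
    fun m => le_card_extensionTree_succ hn hk hlen
      (fun u v hv => hkn ▸ hII _ (hcompat u v hv).2.2) (fun _ => card_chooseExtensions_le)
      fun u hu => card_chooseExtensions (hIII u (hL hu))
  have hne : ∀ m, (extensionTree E m).Nonempty := fun m => by
    have h := hmono (Nat.zero_le m)
    simp only [extensionTree, card_singleton, Nat.cast_one, pow_zero, mul_one] at h
    rw [← card_pos, ← Nat.cast_pos (α := ℝ)]
    exact pos_of_mul_pos_left (one_pos.trans_le h) (pow_nonneg hx0.le m)
  exact infinite_setOf_sqFree_compatInf_of_nonempty hw hlen (fun u v hv => (hcompat u v hv).2.1) hne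

theorem squares_avoidable_forced_letters_singleton
    {α : Type*} [Fintype α] (w : List (Option α)) (hw : w ≠ [])
    (p : ℕ) (hp : 2 * w.length ≤ p) (hdvd : w.length ∣ p)
    (C : ℕ) (hC : 0 < C) (L : Set (List α))
    (hI : [] ∈ L)
    (hII : ∀ u ∈ L, AvoidsSquaresLt p u)
    (hIII : ∀ u ∈ L,
      C ≤ Set.ncard {v : List α | v.length = w.length ∧ CompatFin v w ∧ u ++ v ∈ L})
    (hIV : ∃ x : ℝ, 0 < x ∧ x < 1 ∧
      (x⁻¹ : ℝ) ≤ (C : ℝ) * (1 - x ^ (p / w.length - 1) * (w.length : ℝ) ^ 2 / (1 - x))) :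
    {v : List α | SqFree v ∧ CompatInf v (wOmega w)}.Infinite :=
  squares_avoidable_forced_letters_singleton_general w hw p hp hdvd C L hI hII hIII hIV
end

section
/- Let Σ be a finite alphabet, let p ≥ 2 be an integer, let W be a set of finite partial words over Σ, let f : ℕ_{>0} → ℕ_{>0}, let G(V,A) = R_p(Σ) be the Rauzy graph of length 2p−3 of the square-free words over Σ, and let X ⊆ V be a nonempty set such that for all v ∈ X and all w ∈ W, p_{|w|,w,G[X]}(v) ≥ f(|w|). Then there exists a language L of finite words over Σ such that: the empty word belongs to L; every u ∈ L avoids squares of period less than p; and for every u ∈ L and every w ∈ W there are at least f(|w|) different words v ∈ Σ^{|w|} compatible with w such that uv ∈ L. -/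
/-- The arcs of the induced subgraph `G[X]`. -/
def inducedArcs {α : Type*} (A : Set (List α × List α × α)) (X : Set (List α)) :
    Set (List α × List α × α) :=
  {t | t ∈ A ∧ t.1 ∈ X ∧ t.2.1 ∈ X}

/-- The vertices of `R_p(α)`, the Rauzy graph of length `2p-3` of square-free words. -/
def rauzyVertices (α : Type*) (p : ℕ) : Set (List α) :=
  {u | SqFree u ∧ u.length = 2 * p - 3}

/-- The arcs of `R_p(α)`: `(au, ub, b)` for square-free words `aub` of length `2p-2`. -/
def rauzyArcs (α : Type*) (p : ℕ) : Set (List α × List α × α) :=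
  {t | ∃ (a b : α) (u : List α), SqFree (a :: (u ++ [b])) ∧ u.length = 2 * p - 4 ∧
    t = (a :: u, u ++ [b], b)}

/-- The walk counts `p_{i,w,G}(v)`: number of walks of length `i` starting from `v`
compatible with the last `i` letters of the partial word `w`. -/
noncomputable def walkCount {α : Type*} (A : Set (List α × List α × α))
    (w : List (Option α)) : ℕ → List α → ℕ
  | 0, _ => 1
  | i + 1, v =>
    ∑ᶠ (u : List α), ∑ᶠ (a : α),
      ∑ᶠ (_ : (v, u, a) ∈ A ∧ ∀ b : α, w[w.length - (i + 1)]? = some (some b) → a = b),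
        walkCount A w i u

section

variable {α : Type*}

def slide (v : List α) (a : α) : List α := v.tail ++ [a]

/-- The arcs of a Rauzy graph have the form `(v, slide v a, a)`, so a walk in it is determined by
its start and its label word. -/
def IsSlideWalk (A : Set (List α × List α × α)) : List α → List α → Prop
  | _, [] => True
  | v, a :: s => (v, slide v a, a) ∈ A ∧ IsSlideWalk A (slide v a) s

def slideEnd (v s : List α) : List α := s.foldl slide v

theorem compatFin_cons_cons {a : α} {s : List α} {m : Option α} {μ : List (Option α)} :
    CompatFin (a :: s) (m :: μ) ↔ (∀ b, m = some b → a = b) ∧ CompatFin s μ := by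
  constructor
  · rintro ⟨hlen, hget⟩
    refine ⟨fun b hb => ?_, by simpa using hlen, fun i hi b hb => ?_⟩
    · simpa using hget 0 (by simp) b (by simp [hb])
    · simpa using hget (i + 1) (by simpa using hi) b (by simpa using hb)
  · rintro ⟨hm, hlen, hget⟩
    refine ⟨by simpa using hlen, fun i hi b hb => ?_⟩
    cases i with
    | zero => simp_all
    | succ i => simpa using hget i (by simpa using hi) b (by simpa using hb)

section Walks

variable {A : Set (List α × List α × α)}

theorem isSlideWalk_append {u s : List α} : ∀ {v : List α},
    IsSlideWalk A v (u ++ s) ↔ IsSlideWalk A v u ∧ IsSlideWalk A (slideEnd v u) s := by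
  induction u with
  | nil => simp [IsSlideWalk, slideEnd]
  | cons a u ih => intro v; simp [IsSlideWalk, slideEnd, ih, and_assoc]

theorem slideEnd_mem {X : Set (List α)} (hA : ∀ t ∈ A, t.2.1 ∈ X) {s : List α} :
    ∀ {v : List α}, v ∈ X → IsSlideWalk A v s → slideEnd v s ∈ X := by
  induction s with
  | nil => exact fun hv _ => hv
  | cons a s ih => exact fun _ hs => ih (hA _ hs.1) hs.2

theorem walkCount_cons {m : Option α} {μ : List (Option α)} :
    ∀ {i : ℕ}, i ≤ μ.length → walkCount A (m :: μ) i = walkCount A μ i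
  | 0, _ => by ext v; simp [walkCount]
  | i + 1, hi => by
    ext v
    have hidx : μ.length + 1 - (i + 1) = μ.length - (i + 1) + 1 := by omega
    simp only [walkCount, List.length_cons, hidx, List.getElem?_cons_succ,
      walkCount_cons (m := m) (by omega : i ≤ μ.length)]

variable [Finite α] (hA : ∀ v u a, (v, u, a) ∈ A → u = slide v a)
include hA

theorem walkCount_succ_of_slide (w : List (Option α)) (i : ℕ) (v : List α) :
    walkCount A w (i + 1) v = ∑ᶠ (a : α), ∑ᶠ (_ : (v, slide v a, a) ∈ A ∧
      ∀ b : α, w[w.length - (i + 1)]? = some (some b) → a = b), walkCount A w i (slide v a) := by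
  classical
  have : Fintype α := Fintype.ofFinite α
  rw [walkCount]
  simp only [finsum_eq_sum_of_fintype (α := α)]
  rw [finsum_sum_comm]
  · refine Finset.sum_congr rfl fun a _ => finsum_eq_single _ (slide v a) fun u hu => ?_
    rw [finsum_eq_if, if_neg fun h => hu (hA _ _ _ h.1)]
  · intro a _
    refine (Set.finite_singleton (slide v a)).subset fun u hu => ?_
    by_contra hne
    rw [Function.mem_support, finsum_eq_if, if_neg fun h => hne (hA _ _ _ h.1)] at hu
    exact hu rfl

theorem walkCount_length_eq_ncard (w : List (Option α)) : ∀ v : List α,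
    walkCount A w w.length v =
      {s : List α | s.length = w.length ∧ CompatFin s w ∧ IsSlideWalk A v s}.ncard := by
  induction w with
  | nil =>
    intro v
    have hnil : {s : List α | s.length = 0 ∧ CompatFin s [] ∧ IsSlideWalk A v s} = {[]} := by
      ext s
      simp only [Set.mem_singleton_iff, List.length_eq_zero_iff]
      constructor
      · exact And.left
      · rintro rfl; simp [CompatFin, IsSlideWalk]
    rw [List.length_nil, hnil, Set.ncard_singleton, walkCount]
  | cons m μ ih =>
    intro v
    set C : α → Prop := fun a => (v, slide v a, a) ∈ A ∧ ∀ b, m = some b → a = b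
    have hsplit : {s : List α | s.length = (m :: μ).length ∧ CompatFin s (m :: μ) ∧
        IsSlideWalk A v s} = ⋃ a, (a :: ·) '' {t | C a ∧ t.length = μ.length ∧
          CompatFin t μ ∧ IsSlideWalk A (slide v a) t} := by
      ext (_ | ⟨a, t⟩)
      · simp
      · simp only [List.length_cons, Set.mem_ofPred_eq, Nat.add_right_cancel_iff,
          compatFin_cons_cons, IsSlideWalk, Set.mem_iUnion, Set.mem_image, List.cons.injEq,
          exists_eq_right_right, exists_eq_right, C]
        tauto
    rw [hsplit, Set.ncard_iUnion_of_finite, List.length_cons, walkCount_succ_of_slide hA]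
    · refine finsum_congr fun a => ?_
      rw [Set.ncard_image_of_injective _ List.cons_injective, walkCount_cons le_rfl, ih]
      simp only [List.length_cons, Nat.sub_self, List.getElem?_cons_zero, Option.some.injEq]
      classical
      by_cases hC : C a
      · rw [finsum_eq_if, if_pos hC]
        simp [hC]
      · rw [finsum_eq_if, if_neg hC]
        simp [hC]
    · exact fun a => ((List.finite_length_eq α _).subset fun t ht => ht.2.1).image _
    · refine fun a b hab => Set.disjoint_left.2 ?_
      rintro _ ⟨t, -, rfl⟩ ⟨t', -, h⟩
      exact hab (List.cons_eq_cons.1 h).1.symm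

end Walks

section Squares

variable {p : ℕ}

theorem SqFree.avoidsSquaresLt {l : List α} (h : SqFree l) : AvoidsSquaresLt p l :=
  fun r hr _ => h r hr

theorem AvoidsSquaresLt.of_infix {l l' : List α} (h : AvoidsSquaresLt p l) (hl : l' <:+: l) :
    AvoidsSquaresLt p l' :=
  fun r hr hrp hsq => h r hr hrp (hsq.trans hl)

theorem AvoidsSquaresLt.cons_of_sqFree {c : α} {x y : List α} (hy : AvoidsSquaresLt p (x ++ y))
    (hx : SqFree (c :: x)) (hlen : 2 * (p - 1) ≤ x.length + 1) :
    AvoidsSquaresLt p (c :: (x ++ y)) := by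
  intro r hr hrp hsq
  rcases List.infix_cons_iff.1 hsq with hpre | hinf
  · have hshort : (r ++ r).length ≤ (c :: x).length := by
      simp only [List.length_append, List.length_cons]
      omega
    exact hx r hr (List.prefix_of_prefix_length_le hpre (List.prefix_append _ y) hshort).isInfix
  · exact hy r hr hrp hinf

theorem mem_rauzyArcs {v u : List α} {a : α} :
    (v, u, a) ∈ rauzyArcs α p ↔
      ∃ c t, v = c :: t ∧ u = t ++ [a] ∧ t.length = 2 * p - 4 ∧ SqFree (c :: (t ++ [a])) := by
  simp only [rauzyArcs, Set.mem_ofPred_eq, Prod.mk.injEq]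
  constructor
  · rintro ⟨c, b, t, hsq, ht, rfl, rfl, rfl⟩
    exact ⟨c, t, rfl, rfl, ht, hsq⟩
  · rintro ⟨c, t, rfl, rfl, ht, hsq⟩
    exact ⟨c, a, t, hsq, ht, rfl, rfl, rfl⟩

theorem eq_slide_of_mem_rauzyArcs {v u : List α} {a : α} (h : (v, u, a) ∈ rauzyArcs α p) :
    u = slide v a := by
  obtain ⟨c, t, rfl, rfl, -⟩ := mem_rauzyArcs.1 h
  rfl

theorem avoidsSquaresLt_append_of_isSlideWalk {X : Set (List α)} (hX : X ⊆ rauzyVertices α p)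
    {s : List α} : ∀ {v : List α}, v ∈ X →
      IsSlideWalk (inducedArcs (rauzyArcs α p) X) v s → AvoidsSquaresLt p (v ++ s) := by
  induction s with
  | nil => exact fun hv _ => by simpa using (hX hv).1.avoidsSquaresLt
  | cons a s ih =>
    rintro v hv ⟨⟨harc, -, hnext⟩, hs⟩
    obtain ⟨c, t, rfl, -, ht, hsq⟩ := mem_rauzyArcs.1 harc
    simp only [slide, List.tail_cons] at hnext hs
    have hlen : 2 * (p - 1) ≤ (t ++ [a]).length + 1 := by
      simp only [List.length_append, List.length_singleton]
      omega
    simpa using (ih hnext hs).cons_of_sqFree hsq hlen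

end Squares

end

theorem language_from_rauzy_subgraph_general
    {α : Type*} [Fintype α] (p : ℕ)
    (W : Set (List (Option α))) (f : ℕ → ℕ)
    (X : Set (List α)) (hX : X ⊆ rauzyVertices α p) (hXne : X.Nonempty)
    (h : ∀ v ∈ X, ∀ w ∈ W,
      f w.length ≤ walkCount (inducedArcs (rauzyArcs α p) X) w w.length v) :
    ∃ L : Set (List α), [] ∈ L ∧ (∀ u ∈ L, AvoidsSquaresLt p u) ∧
      ∀ u ∈ L, ∀ w ∈ W,
        f w.length ≤ Set.ncard {v : List α | v.length = w.length ∧ CompatFin v w ∧ u ++ v ∈ L} := by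
  obtain ⟨v₀, hv₀⟩ := hXne
  set A := inducedArcs (rauzyArcs α p) X
  refine ⟨{u | IsSlideWalk A v₀ u}, trivial, fun u hu => ?_, fun u hu w hw => ?_⟩
  · exact (avoidsSquaresLt_append_of_isSlideWalk hX hv₀ hu).of_infix
      (List.suffix_append _ _).isInfix
  · have hend : slideEnd v₀ u ∈ X := slideEnd_mem (fun t ht => ht.2.2) hv₀ hu
    calc f w.length ≤ walkCount A w w.length (slideEnd v₀ u) := h _ hend w hw
      _ = _ := walkCount_length_eq_ncard (fun _ _ _ ht => eq_slide_of_mem_rauzyArcs ht.1) w _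
      _ = _ := by
        simp only [Set.mem_ofPred_eq, isSlideWalk_append, show IsSlideWalk A v₀ u from hu, true_and]

theorem language_from_rauzy_subgraph
    {α : Type*} [Fintype α] (p : ℕ) (hp : 2 ≤ p)
    (W : Set (List (Option α))) (f : ℕ → ℕ) (hf : ∀ n : ℕ, 0 < n → 0 < f n)
    (X : Set (List α)) (hX : X ⊆ rauzyVertices α p) (hXne : X.Nonempty)
    (h : ∀ v ∈ X, ∀ w ∈ W,
      f w.length ≤ walkCount (inducedArcs (rauzyArcs α p) X) w w.length v) :
    ∃ L : Set (List α), [] ∈ L ∧ (∀ u ∈ L, AvoidsSquaresLt p u) ∧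
      ∀ u ∈ L, ∀ w ∈ W,
        f w.length ≤ Set.ncard {v : List α | v.length = w.length ∧ CompatFin v w ∧ u ++ v ∈ L} :=
  language_from_rauzy_subgraph_general p W f X hX hXne h
end

section
/- Let Σ be a finite alphabet, let p ≥ 2 be an integer, let a ∈ Σ, and let v be a square-free word over Σ with |v| = 2p−3. If the word Ψ(v)a contains no square of period less than p, then the word va contains no square of period less than p (equivalently, va is square-free, since |va| = 2p−2). -/
/-- The defining property of `Ψ`: for every `i` with `⌈|s|/2⌉ + 1 ≤ i ≤ p - 1` there is
`k ∈ {0, …, |s| - i - 1}` with `s_{|s|-k} ≠ s_{|s|-k-i}` (positions 1-indexed). -/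
def PsiProp {α : Type*} (p : ℕ) (s : List α) : Prop :=
  ∀ i : ℕ, (s.length + 1) / 2 + 1 ≤ i → i ≤ p - 1 →
    ∃ k : ℕ, k + i + 1 ≤ s.length ∧ s[s.length - k - 1]? ≠ s[s.length - k - i - 1]?

/-- `Ψ(w)`: the shortest suffix of `w` satisfying `PsiProp p`, i.e. the suffix obtained by
dropping the largest possible number of initial letters. -/
noncomputable def psi {α : Type*} (p : ℕ) (w : List α) : List α :=
  w.drop (sSup {d : ℕ | PsiProp p (w.drop d)})

/-!
Since `v` is square-free, a square in `v ++ [a]` must be a suffix. If its period `i` satisfies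
`2 * i ≤ |Ψ(v)| + 1` it already lies in `Ψ(v) ++ [a]`. Otherwise `⌈|Ψ(v)|/2⌉ < i < p`, so the defining
property of `Ψ(v)` yields a mismatch `s_{|s|-k} ≠ s_{|s|-k-i}` with `k + 2 ≤ i`: both letters lie in
the last `2 * i - 1` letters of `v`, which the square forces to be `i`-periodic. `Ψ(v)` has that
property because `v` has it vacuously when `|v| = 2p - 3`.
-/

namespace List

variable {α : Type*}

theorem IsSuffix.getElem?_length_sub {s w : List α} (h : s <:+ w) {n : ℕ} (hn : n < s.length) :
    s[s.length - n - 1]? = w[w.length - n - 1]? := by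
  obtain ⟨t, rfl⟩ := h
  rw [length_append, getElem?_append_right (by omega)]
  congr 1
  omega

theorem IsSuffix.isSuffix_append_of_length_le {x w s t : List α} (hx : x <:+ w ++ t)
    (hs : s <:+ w) (hlen : x.length ≤ s.length + t.length) : x <:+ s ++ t :=
  suffix_of_suffix_length_le hx (suffix_append_self_iff.mpr hs) (by simpa using hlen)

theorem getElem?_length_sub_eq_of_square_isSuffix {u x : List α} (h : u ++ u <:+ x) {n : ℕ}
    (hn : n < u.length) : x[x.length - n - 1]? = x[x.length - n - u.length - 1]? := by
  obtain ⟨t, rfl⟩ := h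
  simp only [length_append]
  rw [getElem?_append_right (by omega), getElem?_append_right (by omega),
    getElem?_append_right (by omega), getElem?_append_left (by omega)]
  congr 1
  omega

theorem getElem?_length_sub_eq_of_square_isSuffix_concat {u w : List α} {a : α}
    (h : u ++ u <:+ w ++ [a]) {n : ℕ} (hn : n + 1 < u.length) :
    w[w.length - n - 1]? = w[w.length - n - u.length - 1]? := by
  have hper := getElem?_length_sub_eq_of_square_isSuffix h hn
  have hlen := h.length_le
  simp only [length_append, length_singleton] at hper hlen
  rw [getElem?_append_left (by omega), getElem?_append_left (by omega)] at hper
  simpa only [Nat.add_sub_add_right] using hper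

end List

section Psi

open List

variable {α : Type*}

theorem SqFree.isSuffix_of_isInfix_concat {w u : List α} {a : α} (hw : SqFree w) (hu : u ≠ [])
    (h : u ++ u <:+: w ++ [a]) : u ++ u <:+ w ++ [a] :=
  (infix_concat_iff.mp h).resolve_right (hw u hu)

theorem psiProp_of_length {p : ℕ} {s : List α} (h : 2 * p ≤ s.length + 3) : PsiProp p s :=
  fun i hi hip => absurd hip (by omega)

theorem psiProp_psi {p : ℕ} {w : List α} (h : PsiProp p w) : PsiProp p (psi p w) := by
  by_cases hbdd : BddAbove {d : ℕ | PsiProp p (w.drop d)}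
  · exact Nat.sSup_mem ⟨0, h⟩ hbdd
  · rw [psi, Nat.sSup_of_not_bddAbove hbdd]
    exact h

theorem psi_isSuffix (p : ℕ) (w : List α) : psi p w <:+ w :=
  drop_suffix _ _

theorem PsiProp.not_square_isSuffix_concat {p : ℕ} {s w u : List α} {a : α} (hs : PsiProp p s)
    (hsw : s <:+ w) (hlong : s.length + 1 < 2 * u.length) (hup : u.length < p) :
    ¬ u ++ u <:+ w ++ [a] := by
  intro hsq
  obtain ⟨k, hk, hne⟩ := hs u.length (by omega) (by omega)
  refine hne ?_
  rw [hsw.getElem?_length_sub (by omega), Nat.sub_sub s.length k,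
    hsw.getElem?_length_sub (by omega), ← Nat.sub_sub]
  exact getElem?_length_sub_eq_of_square_isSuffix_concat hsq (by omega)

end Psi

theorem extension_of_psi_squarefree_general
    {α : Type*} (p : ℕ) (a : α)
    (v : List α) (hv : SqFree v) (hlen : v.length = 2 * p - 3)
    (h : AvoidsSquaresLt p (psi p v ++ [a])) :
    AvoidsSquaresLt p (v ++ [a]) := by
  intro u hu hup hinf
  have hsq := hv.isSuffix_of_isInfix_concat hu hinf
  have hpsi : PsiProp p (psi p v) := psiProp_psi (psiProp_of_length (by omega))
  by_cases hshort : 2 * u.length ≤ (psi p v).length + 1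
  · refine h u hu hup (hsq.isSuffix_append_of_length_le (psi_isSuffix p v) ?_).isInfix
    simpa [two_mul] using hshort
  · exact hpsi.not_square_isSuffix_concat (psi_isSuffix p v) (by omega) hup hsq

theorem extension_of_psi_squarefree
    {α : Type*} [Fintype α] (p : ℕ) (hp : 2 ≤ p) (a : α)
    (v : List α) (hv : SqFree v) (hlen : v.length = 2 * p - 3)
    (h : AvoidsSquaresLt p (psi p v ++ [a])) :
    AvoidsSquaresLt p (v ++ [a]) :=
  extension_of_psi_squarefree_general p a v hv hlen h
end

section
/- Let Σ be a finite alphabet, let p ≥ 2 be an integer, let W be a set of finite partial words over Σ, let f : ℕ_{>0} → ℕ_{>0}, let G(V,A) = R_p(Σ) be the Rauzy graph of length 2p−3 of the square-free words over Σ, and let X ⊆ Ψ(V) be a nonempty set such that for all v ∈ X and all w ∈ W, p_{|w|,w,Ψ(G)[X]}(v) ≥ f(|w|). Then there exists a language L of finite words over Σ such that: the empty word belongs to L; every u ∈ L avoids squares of period less than p; and for every u ∈ L and every w ∈ W there are at least f(|w|) different words v ∈ Σ^{|w|} compatible with w such that uv ∈ L. -/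
/-- The arc set of `Ψ(G)`: `{(Ψ(a), Ψ(b), c) : (a, b, c) ∈ A}`. -/
def psiArcs {α : Type*} (p : ℕ) (A : Set (List α × List α × α)) :
    Set (List α × List α × α) :=
  {t | ∃ s ∈ A, t = (psi p s.1, psi p s.2.1, s.2.2)}

/-!
Take `L` to be the set of labels of walks in `R_p` through vertices `s` with `Ψ(s) ∈ X`.
These labels avoid squares of period less than `p`, because every factor of length at most
`2p - 2` lies inside one square-free window `s ++ [c]` of the walk. The point of `Ψ` is that
the arcs of `R_p` leaving `s` depend only on `Ψ(s)`: both the square-freeness of `s ++ [c]`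
and `Ψ(s.tail ++ [c])` are determined by `Ψ(s)`, since a square suffix of `s ++ [c]` longer
than `Ψ(s) ++ [c]` would give `Ψ(s)` a period that its defining property excludes. Hence every
walk of `Ψ(G)[X]` from `Ψ(s)` lifts to a walk of `R_p` from `s`, and the walk counts bound
the number of admissible extensions of any word of `L`.
-/

section RauzyWalks

variable {α : Type*} {p : ℕ}

lemma finsum_finsum_finsum_eq_sum_filter {β γ M : Type*} [Fintype γ] [AddCommMonoid M]
    (F : γ → β) (P : β → γ → Prop) [DecidablePred fun a => P (F a) a]
    (hP : ∀ u a, P u a → u = F a) (g : β → M) :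
    ∑ᶠ (u : β) (a : γ) (_ : P u a), g u =
      ∑ a ∈ Finset.univ.filter (fun a => P (F a) a), g (F a) := by
  classical
  have hsingle : ∀ a, ∑ᶠ (u : β) (_ : P u a), g u = if P (F a) a then g (F a) else 0 := by
    intro a
    rw [finsum_eq_single _ (F a) fun u hu => by
      rw [finsum_eq_if, if_neg fun h => hu (hP _ _ h)], finsum_eq_if]
  simp_rw [finsum_eq_sum_of_fintype (fun a => ∑ᶠ (_ : P _ a), g _)]
  rw [finsum_sum_comm, Finset.sum_filter]
  · exact Finset.sum_congr rfl fun a _ => hsingle a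
  · intro a _
    refine (Set.finite_singleton (F a)).subset fun u hu => ?_
    by_contra hne
    exact hu (show ∑ᶠ (_ : P u a), g u = 0 by
      rw [finsum_eq_if, if_neg fun h => hne (hP _ _ h)])

lemma CompatFin.cons {a : α} {v : List α} {m : Option α} {μ : List (Option α)}
    (hv : CompatFin v μ) (ha : ∀ b, m = some b → a = b) : CompatFin (a :: v) (m :: μ) := by
  refine ⟨by simpa using hv.1, fun i hi b hb => ?_⟩
  cases i with
  | zero => simp [ha b (by simpa using hb)]
  | succ i => simpa using hv.2 i (by simpa using hi) b (by simpa using hb)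

lemma sum_ncard_eq_ncard_biUnion_image_cons {T : Finset α} {S : α → Set (List α)}
    (hS : ∀ a, (S a).Finite) :
    ∑ a ∈ T, (S a).ncard = (⋃ a ∈ (T : Set α), (a :: ·) '' S a).ncard := by
  rw [Set.Finite.ncard_biUnion T.finite_toSet, finsum_mem_coe_finset]
  · exact Finset.sum_congr rfl fun a _ =>
      (Set.ncard_image_of_injective _ List.cons_injective).symm
  · exact fun a _ => (hS a).image _
  · intro a _ a' _ hne
    refine Set.disjoint_left.mpr ?_
    rintro _ ⟨v, -, rfl⟩ ⟨v', -, h⟩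
    exact hne (List.cons_eq_cons.mp h).1.symm

lemma getElem?_eq_getElem?_add_of_suffix_append_self {x v : List α} (h : x <:+ v ++ v)
    {j : ℕ} (hj : j + v.length < x.length) : x[j]? = x[j + v.length]? := by
  obtain ⟨z, hz⟩ := h
  have hlen := congrArg List.length hz
  simp only [List.length_append] at hlen
  have hx : ∀ k, x[k]? = (v ++ v)[z.length + k]? := fun k => by
    rw [← hz, List.getElem?_append_right (by omega), Nat.add_sub_cancel_left]
  rw [hx, hx, List.getElem?_append_left (by omega), List.getElem?_append_right (by omega)]
  congr 1
  omega

lemma not_psiProp_nil (hp : 2 ≤ p) : ¬ PsiProp p ([] : List α) := fun h => by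
  obtain ⟨k, hk, -⟩ := h 1 (by simp) (by omega)
  simp at hk

lemma psiProp_of_le_length {s : List α} (hs : 2 * p - 3 ≤ s.length) : PsiProp p s :=
  fun i hi hip => absurd hi (by omega)

lemma PsiProp.append_singleton {t : List α} (ht : PsiProp p t) (c : α) :
    PsiProp p (t ++ [c]) := by
  intro i hi hip
  simp only [List.length_append, List.length_singleton] at hi ⊢
  obtain ⟨k, hk, hne⟩ := ht i (by omega) hip
  refine ⟨k + 1, by omega, ?_⟩
  rwa [List.getElem?_append_left (by omega), List.getElem?_append_left (by omega),
    show t.length + 1 - (k + 1) - 1 = t.length - k - 1 by omega,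
    show t.length + 1 - (k + 1) - i - 1 = t.length - k - i - 1 by omega]

lemma bddAbove_psiProp_drop (hp : 2 ≤ p) (s : List α) :
    BddAbove {d | PsiProp p (s.drop d)} := by
  refine ⟨s.length, fun d hd => ?_⟩
  by_contra! hlt
  rw [Set.mem_ofPred_eq, List.drop_eq_nil_of_le hlt.le] at hd
  exact not_psiProp_nil hp hd

lemma psiProp_psi_s6 (hp : 2 ≤ p) {s : List α} (hs : 2 * p - 3 ≤ s.length) :
    PsiProp p (psi p s) :=
  Nat.sSup_mem ⟨0, psiProp_of_le_length hs⟩ (bddAbove_psiProp_drop hp s)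

lemma psi_eq_psi_of_suffix (hp : 2 ≤ p) {x y : List α} (hxy : x <:+ y) (hx : PsiProp p x) :
    psi p y = psi p x := by
  set d := y.length - x.length
  have hd : y.drop d = x := (List.suffix_iff_eq_drop.mp hxy).symm
  have hshift : ∀ e, y.drop (d + e) = x.drop e := fun e => by rw [← List.drop_drop, hd]
  have hD := bddAbove_psiProp_drop hp y
  have hE := bddAbove_psiProp_drop hp x
  have hdD : d ∈ {e | PsiProp p (y.drop e)} := by
    rwa [Set.mem_ofPred_eq, hd]
  have hsup : sSup {e | PsiProp p (y.drop e)} = d + sSup {e | PsiProp p (x.drop e)} := by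
    have hm := Nat.sSup_mem ⟨d, hdD⟩ hD
    have hdm := le_csSup hD hdD
    refine le_antisymm ?_ (le_csSup hD ?_)
    · have : sSup {e | PsiProp p (y.drop e)} - d ∈ {e | PsiProp p (x.drop e)} := by
        rwa [Set.mem_ofPred_eq, ← hshift, Nat.add_sub_cancel' hdm]
      have := le_csSup hE this
      omega
    · rw [Set.mem_ofPred_eq, hshift]
      exact Nat.sSup_mem ⟨0, hx⟩ hE
  rw [psi, hsup, hshift, psi]

/-- Unless `psi p s = s`, both sides equal `psi p (psi p s ++ [c])`. -/
lemma psi_tail_append_eq (hp : 2 ≤ p) {s s' : List α} (hl : s.length = 2 * p - 3)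
    (hl' : s'.length = 2 * p - 3) (hψ : psi p s = psi p s') (c : α) :
    psi p (s.tail ++ [c]) = psi p (s'.tail ++ [c]) := by
  have hts : psi p s <:+ s := List.drop_suffix _ _
  have hts' : psi p s <:+ s' := hψ ▸ List.drop_suffix _ _
  rcases hts.length_le.eq_or_lt with hfull | hlt
  · rw [← hts.eq_of_length hfull, hts'.eq_of_length (by omega)]
  · have key : ∀ r : List α, psi p s <:+ r → (psi p s).length < r.length →
        psi p (r.tail ++ [c]) = psi p (psi p s ++ [c]) := by
      intro r hr hlt
      obtain _ | ⟨a, r⟩ := r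
      · simp at hlt
      have hr' : psi p s <:+ r :=
        (List.suffix_cons_iff.mp hr).resolve_left fun h => by simp [h] at hlt
      exact psi_eq_psi_of_suffix hp (List.suffix_append_self_iff.mpr hr')
        ((psiProp_psi_s6 hp hl.ge).append_singleton c)
    rw [key s hts hlt, key s' hts' (by omega)]

/-- A square suffix of `s' ++ [c]` either fits into `psi p s' ++ [c]`, which is also a suffix
of `s ++ [c]`, or is so long that `psi p s'` would have period `v.length`, against `PsiProp`. -/
lemma sqFree_append_singleton_of_psi_eq (hp : 2 ≤ p) {s s' : List α} (hs' : SqFree s')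
    (hl' : s'.length = 2 * p - 3) (hψ : psi p s = psi p s')
    {c : α} (h : SqFree (s ++ [c])) : SqFree (s' ++ [c]) := by
  intro v hv hvv
  rcases List.infix_concat_iff.mp hvv with hsuf | hin
  swap
  · exact hs' v hv hin
  have htP := psiProp_psi_s6 hp hl'.ge
  set t := psi p s'
  have ht : t ++ [c] <:+ s' ++ [c] := List.suffix_append_self_iff.mpr (List.drop_suffix _ _)
  have hvlen := hsuf.length_le
  simp only [List.length_append, List.length_singleton] at hvlen
  by_cases hshort : (v ++ v).length ≤ (t ++ [c]).length
  · have hts : t ++ [c] <:+ s ++ [c] :=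
      List.suffix_append_self_iff.mpr (hψ ▸ List.drop_suffix _ _)
    exact h v hv ((List.suffix_of_suffix_length_le hsuf ht hshort).trans hts).isInfix
  · simp only [List.length_append, List.length_singleton] at hshort
    have htv : t ++ [c] <:+ v ++ v := List.suffix_of_suffix_length_le ht hsuf
      (by simp only [List.length_append, List.length_cons, List.length_nil]; omega)
    obtain ⟨k, hk, hne⟩ := htP v.length (by omega) (by omega)
    have hper := getElem?_eq_getElem?_add_of_suffix_append_self htv
      (j := t.length - k - v.length - 1)
      (by simp only [List.length_append, List.length_cons, List.length_nil]; omega)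
    rw [List.getElem?_append_left (by omega), List.getElem?_append_left (by omega),
      show t.length - k - v.length - 1 + v.length = t.length - k - 1 by omega] at hper
    exact hne hper.symm

/-- `RauzyWalk p X s u`: the word `u` labels a walk in `R_p` from `s` all of whose vertices
have `Ψ`-image in `X`; the arc of `R_p` from `s` labelled `c` exists iff `s ++ [c]` is
square-free, and it ends at `s.tail ++ [c]`. -/
def RauzyWalk (p : ℕ) (X : Set (List α)) : List α → List α → Prop
  | s, [] => s ∈ rauzyVertices α p ∧ psi p s ∈ X
  | s, c :: u => s ∈ rauzyVertices α p ∧ psi p s ∈ X ∧ SqFree (s ++ [c]) ∧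
      RauzyWalk p X (s.tail ++ [c]) u

variable {X : Set (List α)}

lemma RauzyWalk.append {s u v : List α} (hu : RauzyWalk p X s u)
    (hv : RauzyWalk p X (u.foldl (fun s c => s.tail ++ [c]) s) v) :
    RauzyWalk p X s (u ++ v) := by
  induction u generalizing s with
  | nil => exact hv
  | cons c u ih => exact ⟨hu.1, hu.2.1, hu.2.2.1, ih hu.2.2.2 hv⟩

lemma RauzyWalk.endpoint {s u : List α} (h : RauzyWalk p X s u) :
    RauzyWalk p X (u.foldl (fun s c => s.tail ++ [c]) s) [] := by
  induction u generalizing s with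
  | nil => exact h
  | cons c u ih => exact ih h.2.2.2

/-- Every factor of length at most `2p - 2` of `s ++ u` lies in one window `s_i ++ [c]`
of the walk, and these windows are square-free. -/
lemma RauzyWalk.not_square_infix (hp : 2 ≤ p) {s u v : List α} (h : RauzyWalk p X s u)
    (hv : v ≠ []) (hvp : v.length < p) : ¬ v ++ v <:+: s ++ u := by
  induction u generalizing s with
  | nil => simpa using h.1.1 v hv
  | cons c u ih =>
    obtain ⟨⟨-, hlen⟩, -, hsq, htail⟩ := h
    obtain _ | ⟨a, r⟩ := s
    · simp only [List.length_nil] at hlen; omega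
    rw [show (a :: r) ++ c :: u = a :: ((r ++ [c]) ++ u) by simp,
      List.infix_cons_iff]
    rintro (hpre | hin)
    · refine hsq v hv (List.prefix_of_prefix_length_le hpre ?_ ?_).isInfix
      · exact ⟨u, by simp⟩
      · simp only [List.length_cons, List.length_append, List.cons_append, List.length_nil]
          at hlen ⊢
        omega
    · exact ih htail hin

lemma RauzyWalk.avoidsSquaresLt (hp : 2 ≤ p) {s u : List α} (h : RauzyWalk p X s u) :
    AvoidsSquaresLt p u := fun _ hv hvp hvv =>
  h.not_square_infix hp hv hvp (hvv.trans (List.suffix_append s u).isInfix)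

lemma rauzyWalk_singleton_of_mem_inducedArcs (hp : 2 ≤ p) {s u : List α} {a : α}
    (hs : s ∈ rauzyVertices α p)
    (h : (psi p s, u, a) ∈ inducedArcs (psiArcs p (rauzyArcs α p)) X) :
    u = psi p (s.tail ++ [a]) ∧ RauzyWalk p X s [a] := by
  obtain ⟨⟨_, ⟨a₁, b, r, hsq, hr, rfl⟩, ht⟩, hsX, huX⟩ := h
  simp only [Prod.mk.injEq] at ht
  obtain ⟨hψ, rfl, rfl⟩ := ht
  have hl₁ : (a₁ :: r).length = 2 * p - 3 := by rw [List.length_cons]; omega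
  have hψ' := psi_tail_append_eq hp hl₁ hs.2 hψ.symm a
  have hsq' : SqFree (s ++ [a]) :=
    sqFree_append_singleton_of_psi_eq hp hs.1 hs.2 hψ.symm (by simpa using hsq)
  have htail : s.tail ++ [a] <:+ s ++ [a] := List.suffix_append_self_iff.mpr (List.tail_suffix s)
  refine ⟨hψ', hs, hsX, hsq', ⟨fun v hv hvv => hsq' v hv (hvv.trans htail.isInfix), ?_⟩,
    hψ' ▸ huX⟩
  simp only [List.length_append, List.length_tail, hs.2, List.length_cons, List.length_nil]
  omega

def compatibleWalks (p : ℕ) (X : Set (List α)) (s : List α) (μ : List (Option α)) :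
    Set (List α) :=
  {v | v.length = μ.length ∧ CompatFin v μ ∧ RauzyWalk p X s v}

lemma compatibleWalks_finite [Finite α] (p : ℕ) (X : Set (List α)) (s : List α)
    (μ : List (Option α)) : (compatibleWalks p X s μ).Finite :=
  (List.finite_length_eq α μ.length).subset fun _ hv => hv.1

lemma walkCount_le_ncard_compatibleWalks [Finite α] (hp : 2 ≤ p) (w : List (Option α))
    {i : ℕ} (hi : i ≤ w.length) {s : List α} (hs : RauzyWalk p X s []) :
    walkCount (inducedArcs (psiArcs p (rauzyArcs α p)) X) w i (psi p s) ≤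
      (compatibleWalks p X s (w.drop (w.length - i))).ncard := by
  classical
  have := Fintype.ofFinite α
  induction i generalizing s with
  | zero =>
    refine (Set.ncard_pos (compatibleWalks_finite p X s _)).mpr ⟨[], ?_, ⟨?_, ?_⟩, hs⟩
      <;> simp
  | succ i ih =>
    set A := inducedArcs (psiArcs p (rauzyArcs α p)) X
    set m := w[w.length - (i + 1)]
    set S := fun a => compatibleWalks p X (s.tail ++ [a]) (w.drop (w.length - i))
    have hdrop : w.drop (w.length - (i + 1)) = m :: w.drop (w.length - i) := by
      rw [List.drop_eq_getElem_cons (by omega),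
        show w.length - (i + 1) + 1 = w.length - i by omega]
    have harc := fun {u} {a} (h : (psi p s, u, a) ∈ A) =>
      rauzyWalk_singleton_of_mem_inducedArcs hp hs.1 h
    set T := Finset.univ.filter fun a =>
      (psi p s, psi p (s.tail ++ [a]), a) ∈ A ∧
        ∀ b, w[w.length - (i + 1)]? = some (some b) → a = b
    have hcons : ∀ a ∈ T,
        (a :: ·) '' S a ⊆ compatibleWalks p X s (w.drop (w.length - (i + 1))) := by
      rintro a ha _ ⟨v, ⟨hvl, hvc, hv⟩, rfl⟩
      obtain ⟨hA, hm⟩ := (Finset.mem_filter.mp ha).2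
      have hcompat : CompatFin (a :: v) (w.drop (w.length - (i + 1))) :=
        hdrop ▸ hvc.cons fun b hb =>
          hm b ((List.getElem?_eq_getElem _).trans (congrArg some hb))
      exact ⟨by simp [hdrop, hvl], hcompat, (harc hA).2.append (by simpa using hv)⟩
    calc walkCount A w (i + 1) (psi p s)
        = ∑ a ∈ T, walkCount A w i (psi p (s.tail ++ [a])) :=
          finsum_finsum_finsum_eq_sum_filter _ _ (fun _ _ h => (harc h.1).1) _
      _ ≤ ∑ a ∈ T, (S a).ncard :=
          Finset.sum_le_sum fun a ha =>
            ih (by omega) (harc (Finset.mem_filter.mp ha).2.1).2.2.2.2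
      _ = (⋃ a ∈ (T : Set α), (a :: ·) '' S a).ncard :=
          sum_ncard_eq_ncard_biUnion_image_cons fun _ => compatibleWalks_finite p X _ _
      _ ≤ _ := Set.ncard_le_ncard (Set.iUnion₂_subset hcons) (compatibleWalks_finite p X s _)

end RauzyWalks

theorem language_from_psi_rauzy_subgraph_general
    {α : Type*} [Fintype α] (p : ℕ) (hp : 2 ≤ p)
    (W : Set (List (Option α))) (f : ℕ → ℕ)
    (X : Set (List α)) (hX : X ⊆ psi p '' rauzyVertices α p) (hXne : X.Nonempty)
    (h : ∀ v ∈ X, ∀ w ∈ W,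
      f w.length ≤ walkCount (inducedArcs (psiArcs p (rauzyArcs α p)) X) w w.length v) :
    ∃ L : Set (List α), [] ∈ L ∧ (∀ u ∈ L, AvoidsSquaresLt p u) ∧
      ∀ u ∈ L, ∀ w ∈ W,
        f w.length ≤ Set.ncard {v : List α | v.length = w.length ∧ CompatFin v w ∧ u ++ v ∈ L} := by
  obtain ⟨_, hx⟩ := hXne
  obtain ⟨s₀, hs₀, rfl⟩ := hX hx
  refine ⟨{u | ∃ s, RauzyWalk p X s u}, ⟨s₀, hs₀, hx⟩,
    fun _ ⟨_, hs⟩ => hs.avoidsSquaresLt hp, ?_⟩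
  rintro u ⟨s, hs⟩ w hw
  have he := hs.endpoint
  calc f w.length
      ≤ walkCount (inducedArcs (psiArcs p (rauzyArcs α p)) X) w w.length (psi p _) :=
        h _ he.2 w hw
    _ ≤ (compatibleWalks p X _ (w.drop (w.length - w.length))).ncard :=
        walkCount_le_ncard_compatibleWalks hp w le_rfl he
    _ ≤ _ := by
        refine Set.ncard_le_ncard (fun v ⟨hvl, hvc, hv⟩ => ?_)
          ((List.finite_length_eq α w.length).subset fun _ hv => hv.1)
        simp only [Nat.sub_self, List.drop_zero] at hvl hvc
        exact ⟨hvl, hvc, s, hs.append hv⟩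

theorem language_from_psi_rauzy_subgraph
    {α : Type*} [Fintype α] (p : ℕ) (hp : 2 ≤ p)
    (W : Set (List (Option α))) (f : ℕ → ℕ) (hf : ∀ n : ℕ, 0 < n → 0 < f n)
    (X : Set (List α)) (hX : X ⊆ psi p '' rauzyVertices α p) (hXne : X.Nonempty)
    (h : ∀ v ∈ X, ∀ w ∈ W,
      f w.length ≤ walkCount (inducedArcs (psiArcs p (rauzyArcs α p)) X) w w.length v) :
    ∃ L : Set (List α), [] ∈ L ∧ (∀ u ∈ L, AvoidsSquaresLt p u) ∧
      ∀ u ∈ L, ∀ w ∈ W,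
        f w.length ≤ Set.ncard {v : List α | v.length = w.length ∧ CompatFin v w ∧ u ++ v ∈ L} :=
  language_from_psi_rauzy_subgraph_general p hp W f X hX hXne h
end

section
/- There is no infinite square-free word u = u_1 u_2 u_3 … over the three-letter alphabet {0,1,2} such that for every integer j ≥ 0, u_{6j+1} = j mod 3 (that is, no infinite square-free ternary word is compatible with the infinite partial word (0⋄⋄⋄⋄⋄1⋄⋄⋄⋄⋄2⋄⋄⋄⋄⋄)^ω). Consequently d({0,1,2}) ≥ 7. -/
/-- An infinite word `u` (positions indexed from 1) is square-free: it has no factor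
`u_i … u_{i+n-1} u_{i+n} … u_{i+2n-1}` with the two halves equal. -/
def SqFreeSeq {α : Type*} (u : ℕ → α) : Prop :=
  ∀ i n : ℕ, 1 ≤ i → 1 ≤ n → ∃ k, k < n ∧ u (i + k) ≠ u (i + n + k)

/-!
A square-free word compatible with `(0⋄⋄⋄⋄⋄1⋄⋄⋄⋄⋄2⋄⋄⋄⋄⋄)^ω` would have compatible square-free
prefixes of every length, but an exhaustive depth-first search, run by the kernel, finds none of
length 105.
-/

/-- The prefix `u 1, …, u m` as a base-`b` numeral, with `u m` as its lowest digit. -/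
def encodePrefix {b : ℕ} (u : ℕ → Fin b) : ℕ → ℕ
  | 0 => 0
  | m + 1 => encodePrefix u m * b + u (m + 1)

/-- For a word of length `m` encoded as `w`, the last `n` letters are `w % b ^ n` and the `n`
letters before them are `w / b ^ n % b ^ n`. -/
def hasSquareSuffix (b m w : ℕ) : Bool :=
  (List.range' 1 (m / 2)).any fun n => w % b ^ n == w / b ^ n % b ^ n

/-- Whether the word of length `m` encoded as `w` extends by `len` letters `a < b` to a word whose
prefixes are all square-free and whose letter `a` at each new position `p` has `allowed p a`. -/
def hasSquareFreeExtension (b : ℕ) (allowed : ℕ → ℕ → Bool) : ℕ → ℕ → ℕ → Bool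
  | 0, _, _ => true
  | len + 1, m, w => (List.range b).any fun a =>
      allowed (m + 1) a && !hasSquareSuffix b (m + 1) (w * b + a) &&
        hasSquareFreeExtension b allowed len (m + 1) (w * b + a)

theorem Nat.div_pow_mod_mod_pow {b n t : ℕ} (x : ℕ) (ht : t < n) :
    x % b ^ n / b ^ t % b = x / b ^ t % b := by
  rw [← Nat.add_sub_cancel' ht.le, pow_add, Nat.mod_mul_right_div_self,
    Nat.mod_mod_of_dvd _ (dvd_pow_self b (by omega))]

theorem encodePrefix_div_pow_mod {b : ℕ} (u : ℕ → Fin b) {m t : ℕ} (ht : t < m) :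
    encodePrefix u m / b ^ t % b = u (m - t) := by
  induction m generalizing t with
  | zero => omega
  | succ m ih =>
    have hb : 0 < b := (u 0).pos
    rcases t with _ | t
    · simp [encodePrefix, Nat.mul_add_mod_self_right, Nat.mod_eq_of_lt]
    · rw [encodePrefix, pow_succ', ← Nat.div_div_eq_div_mul, Nat.add_comm,
        Nat.add_mul_div_right _ _ hb, Nat.div_eq_of_lt (u _).isLt, zero_add, ih (by omega)]
      congr 2
      omega

theorem SqFreeSeq.hasSquareSuffix_encodePrefix {b : ℕ} {u : ℕ → Fin b} (hu : SqFreeSeq u)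
    (m : ℕ) : hasSquareSuffix b m (encodePrefix u m) = false := by
  rw [Bool.eq_false_iff]
  simp only [hasSquareSuffix, ne_eq, List.any_eq_true, List.mem_range'_1, beq_iff_eq, not_exists,
    not_and]
  intro n hn hsq
  obtain ⟨k, hk, hne⟩ := hu (m + 1 - 2 * n) n (by omega) hn.1
  apply hne
  have := congrArg (· / b ^ (n - 1 - k) % b) hsq
  simp only [Nat.div_pow_mod_mod_pow _ (show n - 1 - k < n by omega), Nat.div_div_eq_div_mul,
    ← pow_add, encodePrefix_div_pow_mod u (show n - 1 - k < m by omega),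
    encodePrefix_div_pow_mod u (show n + (n - 1 - k) < m by omega)] at this
  ext
  convert this.symm using 3 <;> omega

theorem SqFreeSeq.hasSquareFreeExtension_encodePrefix {b : ℕ} {u : ℕ → Fin b}
    (hu : SqFreeSeq u) {allowed : ℕ → ℕ → Bool} (hallowed : ∀ p, allowed p (u p) = true)
    (len m : ℕ) : hasSquareFreeExtension b allowed len m (encodePrefix u m) = true := by
  induction len generalizing m with
  | zero => rfl
  | succ len ih =>
    rw [hasSquareFreeExtension, List.any_eq_true]
    refine ⟨u (m + 1), List.mem_range.2 (u _).isLt, ?_⟩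
    have hsq := hu.hasSquareSuffix_encodePrefix (m + 1)
    have hext := ih (m + 1)
    rw [encodePrefix] at hsq hext
    simp [hallowed, hsq, hext]

def periodSixPattern (p a : ℕ) : Bool :=
  decide (p % 6 = 1 → a = p / 6 % 3)

theorem periodSixPattern_eq_true {u : ℕ → ℕ} (hu : ∀ j, u (6 * j + 1) = j % 3) (p : ℕ) :
    periodSixPattern p (u p) = true := by
  simp only [periodSixPattern, decide_eq_true_eq]
  intro hp
  rw [← hu, show 6 * (p / 6) + 1 = p by omega]

theorem hasSquareFreeExtension_periodSixPattern :
    hasSquareFreeExtension 3 periodSixPattern 105 0 0 = false := by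
  decide +kernel

theorem no_squarefree_ternary_period_6 :
    ¬ ∃ u : ℕ → Fin 3, SqFreeSeq u ∧
        ∀ j : ℕ, u (6 * j + 1) = ⟨j % 3, by omega⟩ := by
  rintro ⟨u, hsf, hu⟩
  have hallowed : ∀ p, periodSixPattern p (u p) = true :=
    periodSixPattern_eq_true fun j => congrArg Fin.val (hu j)
  have hext := hsf.hasSquareFreeExtension_encodePrefix hallowed 105 0
  rw [encodePrefix, hasSquareFreeExtension_periodSixPattern] at hext
  exact Bool.false_ne_true hext
end

section
/- There is no infinite square-free word u = u_1 u_2 u_3 … over the four-letter alphabet {0,1,2,3} such that for every integer j ≥ 0, u_{2j+1} = j mod 4 (that is, no infinite square-free word over {0,1,2,3} is compatible with the infinite partial word (0⋄1⋄2⋄3⋄)^ω). Consequently d({0,1,2,3}) ≥ 3. -/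
/-!
A depth-first search over the words compatible with `(0⋄1⋄2⋄3⋄)^ω` finds that none of length
39 is square-free, so no infinite word compatible with this partial word can be square-free.
-/

section SquareSearch

variable {α : Type*} [DecidableEq α]

/-- `[u m, u (m-1), …, u 1]`: prefixes are kept reversed so that extending one is a `cons`, and
a square suffix of the prefix becomes a square prefix of the list. -/
def revPrefix (u : ℕ → α) : ℕ → List α
  | 0 => []
  | m + 1 => u (m + 1) :: revPrefix u m

omit [DecidableEq α] in
lemma length_revPrefix (u : ℕ → α) : ∀ m, (revPrefix u m).length = m
  | 0 => rfl
  | m + 1 => by simp [revPrefix, length_revPrefix u m]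

omit [DecidableEq α] in
lemma getElem?_revPrefix (u : ℕ → α) : ∀ m q, q < m → (revPrefix u m)[q]? = some (u (m - q))
  | 0, _, h => absurd h (Nat.not_lt_zero _)
  | _ + 1, 0, _ => rfl
  | m + 1, q + 1, h => by
    rw [revPrefix, List.getElem?_cons_succ, getElem?_revPrefix u m q (by omega)]
    congr 2
    omega

def hasSquarePrefix (w : List α) : Bool :=
  (List.range (w.length / 2)).any fun n => w.take (n + 1) == (w.drop (n + 1)).take (n + 1)

lemma SqFreeSeq.hasSquarePrefix_revPrefix {u : ℕ → α} (hu : SqFreeSeq u) (m : ℕ) :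
    hasSquarePrefix (revPrefix u m) = false := by
  by_contra h
  rw [Bool.not_eq_false, hasSquarePrefix, List.any_eq_true] at h
  obtain ⟨n, hn, hsq⟩ := h
  rw [List.mem_range, length_revPrefix] at hn
  rw [beq_iff_eq] at hsq
  have hhalves : ∀ q < n + 1, u (m - q) = u (m - (n + 1 + q)) := by
    intro q hq
    have := congrArg (·[q]?) hsq
    simp only [List.getElem?_take_of_lt hq, List.getElem?_drop] at this
    rwa [getElem?_revPrefix u m q (by omega), getElem?_revPrefix u m (n + 1 + q) (by omega),
      Option.some_inj] at this
  obtain ⟨k, hk, hne⟩ := hu (m + 1 - 2 * (n + 1)) (n + 1) (by omega) (by omega)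
  have hlo : m + 1 - 2 * (n + 1) + k = m - (n + 1 + (n - k)) := by omega
  have hhi : m + 1 - 2 * (n + 1) + (n + 1) + k = m - (n - k) := by omega
  rw [hlo, hhi] at hne
  exact hne (hhalves (n - k) (by omega)).symm

/-- Whether `w` (reversed) can be extended by `f` letters, the letter at position `p` taken from
`allowed p`, without ever creating a square. -/
def extendsSquareFree (allowed : ℕ → List α) : ℕ → List α → Bool
  | 0, _ => true
  | f + 1, w => (allowed (w.length + 1)).any fun a =>
      !hasSquarePrefix (a :: w) && extendsSquareFree allowed f (a :: w)

lemma SqFreeSeq.extendsSquareFree_revPrefix {u : ℕ → α} (hu : SqFreeSeq u)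
    {allowed : ℕ → List α} (hallowed : ∀ p, 1 ≤ p → u p ∈ allowed p) :
    ∀ f m, extendsSquareFree allowed f (revPrefix u m) = true
  | 0, _ => rfl
  | f + 1, m => by
    rw [extendsSquareFree, List.any_eq_true]
    refine ⟨u (m + 1), ?_, ?_⟩
    · rw [length_revPrefix]
      exact hallowed (m + 1) (Nat.succ_pos m)
    · rw [Bool.and_eq_true, Bool.not_eq_true']
      exact ⟨hu.hasSquarePrefix_revPrefix (m + 1),
        hu.extendsSquareFree_revPrefix hallowed f (m + 1)⟩

end SquareSearch

def periodTwoLetters (p : ℕ) : List (Fin 4) :=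
  if p % 2 = 1 then [⟨p / 2 % 4, Nat.mod_lt _ (by norm_num)⟩] else List.finRange 4

set_option maxRecDepth 100000 in
lemma extendsSquareFree_periodTwoLetters : extendsSquareFree periodTwoLetters 39 [] = false := by
  decide

lemma mem_periodTwoLetters {u : ℕ → Fin 4} (hu : ∀ j : ℕ, (u (2 * j + 1) : ℕ) = j % 4)
    (p : ℕ) : u p ∈ periodTwoLetters p := by
  unfold periodTwoLetters
  split_ifs with hp
  · obtain ⟨j, rfl⟩ : ∃ j, p = 2 * j + 1 := ⟨p / 2, by omega⟩
    rw [List.mem_singleton, Fin.ext_iff, hu j, Fin.val_mk]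
    omega
  · exact List.mem_finRange _

theorem no_squarefree_quaternary_period_2 :
    ¬ ∃ u : ℕ → Fin 4, SqFreeSeq u ∧
        ∀ j : ℕ, u (2 * j + 1) = ⟨j % 4, by omega⟩ := by
  rintro ⟨u, hu, hper⟩
  have hallowed : ∀ p, 1 ≤ p → u p ∈ periodTwoLetters p := fun p _ =>
    mem_periodTwoLetters (fun j => congrArg Fin.val (hper j)) p
  have := hu.extendsSquareFree_revPrefix hallowed 39 0
  rw [revPrefix, extendsSquareFree_periodTwoLetters] at this
  exact Bool.false_ne_true this
end

section
/- Let k ≥ 2 be an integer and let Σ ⊆ Σ' be finite alphabets. Suppose that for every sequence v_1, v_2, … of letters of Σ and every strictly increasing sequence of positive integers p_1 < p_2 < … with p_{i+1} − p_i ≥ k for all i, there exists an infinite square-free word u over Σ with u_{p_i} = v_i for all i. Then the same property holds over Σ': for every sequence v'_1, v'_2, … of letters of Σ' and every strictly increasing sequence of positive integers p_1 < p_2 < … with p_{i+1} − p_i ≥ k for all i, there exists an infinite square-free word u' over Σ' with u'_{p_i} = v'_i for all i. (In other words, d(Σ') ≤ d(Σ) whenever Σ ⊆ Σ'; d is a decreasing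 function of the size of the alphabet.) -/
namespace SqFreeSeq

variable {α β : Type*}

theorem congr {u w : ℕ → α} (h : ∀ m, 1 ≤ m → u m = w m) (hu : SqFreeSeq u) :
    SqFreeSeq w := by
  intro i n hi hn
  obtain ⟨j, hj, hne⟩ := hu i n hi hn
  exact ⟨j, hj, by rwa [← h _ (by omega), ← h _ (by omega)]⟩

theorem of_comp {f : α → β} {u : ℕ → α} (h : SqFreeSeq (f ∘ u)) : SqFreeSeq u := by
  intro i n hi hn
  obtain ⟨j, hj, hne⟩ := h i n hi hn
  exact ⟨j, hj, fun heq => hne (congrArg f heq)⟩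

end SqFreeSeq

theorem strictMono_of_add_le_succ {q : ℕ → ℕ} {k : ℕ} (hk : 1 ≤ k)
    (hq : ∀ i, 1 ≤ i → q i + k ≤ q (i + 1)) : StrictMono fun n => q (n + 1) :=
  strictMono_nat_of_lt_succ fun n => by have := hq (n + 1) (by omega); omega

theorem d_monotone_in_alphabet_general
    {α : Type*} (S : Set α) (hS : S.Nonempty)
    (k : ℕ) (hk : 2 ≤ k)
    (h : ∀ v : ℕ → α, (∀ i : ℕ, 1 ≤ i → v i ∈ S) →
      ∀ q : ℕ → ℕ, 1 ≤ q 1 → (∀ i : ℕ, 1 ≤ i → q i + k ≤ q (i + 1)) →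
      ∃ u : ℕ → α, (∀ i : ℕ, 1 ≤ i → u i ∈ S) ∧ SqFreeSeq u ∧
        ∀ i : ℕ, 1 ≤ i → u (q i) = v i) :
    ∀ v : ℕ → α, ∀ q : ℕ → ℕ, 1 ≤ q 1 →
      (∀ i : ℕ, 1 ≤ i → q i + k ≤ q (i + 1)) →
      ∃ u : ℕ → α, SqFreeSeq u ∧ ∀ i : ℕ, 1 ≤ i → u (q i) = v i := by
  classical
  obtain ⟨s₀, hs₀⟩ := hS
  intro v q hq1 hqk
  set π : α → α := fun x => if x ∈ S then x else s₀
  obtain ⟨u, huS, husq, huq⟩ :=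
    h (π ∘ v) (fun i _ => by by_cases hv : v i ∈ S <;> simp [π, hv, hs₀]) q hq1 hqk
  have hinj := (strictMono_of_add_le_succ (by omega) hqk).injective
  set u' := Function.extend (fun n => q (n + 1)) (fun n => v (n + 1)) u
  have hu'q : ∀ n, u' (q (n + 1)) = v (n + 1) := hinj.extend_apply _ _
  have hπu' : ∀ m, 1 ≤ m → u m = π (u' m) := by
    intro m hm
    by_cases hq : ∃ n, q (n + 1) = m
    · obtain ⟨n, rfl⟩ := hq
      rw [hu'q, huq _ (by omega), Function.comp_apply]
    · have hu'm : u' m = u m := Function.extend_apply' _ _ _ hq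
      simp [π, hu'm, huS m hm]
  refine ⟨u', (husq.congr (w := π ∘ u') hπu').of_comp, fun i hi => ?_⟩
  obtain ⟨n, rfl⟩ := Nat.exists_eq_add_of_le' hi
  exact hu'q n

theorem d_monotone_in_alphabet
    {α : Type*} [Fintype α] (S : Set α) (hS : S.Nonempty)
    (k : ℕ) (hk : 2 ≤ k)
    (h : ∀ v : ℕ → α, (∀ i : ℕ, 1 ≤ i → v i ∈ S) →
      ∀ q : ℕ → ℕ, 1 ≤ q 1 → (∀ i : ℕ, 1 ≤ i → q i + k ≤ q (i + 1)) →
      ∃ u : ℕ → α, (∀ i : ℕ, 1 ≤ i → u i ∈ S) ∧ SqFreeSeq u ∧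
        ∀ i : ℕ, 1 ≤ i → u (q i) = v i) :
    ∀ v : ℕ → α, ∀ q : ℕ → ℕ, 1 ≤ q 1 →
      (∀ i : ℕ, 1 ≤ i → q i + k ≤ q (i + 1)) →
      ∃ u : ℕ → α, SqFreeSeq u ∧ ∀ i : ℕ, 1 ≤ i → u (q i) = v i :=
  d_monotone_in_alphabet_general S hS k hk h
end
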